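/- arXiv:2403.09133 — 2 statements merged into one kernel-verified Lean document; each statement's English description precedes it below -/
import Mathlib

section
/- Cross-term bound (inequality (part3) in the proof of Theorem 2.1): For all U, V ∈ ℝ^{n×r} with ‖U‖_F ≤ σ and ‖V‖_F ≤ σ, setting Û = (U + V)/2, it holds that ‖∇f(UVᵀ)(V − Û) + ∇f(VUᵀ)(U − Û)‖_F ≤ Lσ‖V − U‖_F². -/
open Matrix
open scoped BigOperators

noncomputable section

/-- Frobenius inner product of two real matrices. -/
def frobInner {α β : Type*} [Fintype α] [Fintype β] (X Y : Matrix α β ℝ) : ℝ :=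
  ∑ i, ∑ j, X i j * Y i j

/-- Frobenius norm of a real matrix. -/
def frobNorm {α β : Type*} [Fintype α] [Fintype β] (X : Matrix α β ℝ) : ℝ :=
  Real.sqrt (∑ i, ∑ j, (X i j) ^ 2)

/-- Euclidean norm of a real vector. -/
def vecNorm {α : Type*} [Fintype α] (v : α → ℝ) : ℝ :=
  Real.sqrt (∑ i, (v i) ^ 2)

/-- The linear map `𝒜(X) = (⟨A 1, X⟩, …, ⟨A m, X⟩)`. -/
def Aop {n m : ℕ} (A : Fin m → Matrix (Fin n) (Fin n) ℝ)
    (X : Matrix (Fin n) (Fin n) ℝ) : Fin m → ℝ :=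
  fun i => frobInner (A i) X

/-- `s_A = Σ_i ‖A_i‖_F²`. -/
def sA {n m : ℕ} (A : Fin m → Matrix (Fin n) (Fin n) ℝ) : ℝ :=
  ∑ i, (frobNorm (A i)) ^ 2

/-- `(U, V, λ)` is an ε-KKT point of the penalized problem
`min f(UVᵀ) + (γ/2)‖U-V‖² s.t. 𝒜(UVᵀ) = b`, where `grad` denotes the gradient of `f`. -/
def IsPenEpsKKT {n m r : ℕ} (grad : Matrix (Fin n) (Fin n) ℝ → Matrix (Fin n) (Fin n) ℝ)
    (A : Fin m → Matrix (Fin n) (Fin n) ℝ) (b : Fin m → ℝ) (γ ε : ℝ)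
    (U V : Matrix (Fin n) (Fin r) ℝ) (lam : Fin m → ℝ) : Prop :=
  frobNorm (grad (U * Vᵀ) * V + γ • (U - V) + ∑ i, lam i • (A i * V)) ≤ ε ∧
  frobNorm (grad (V * Uᵀ) * U + γ • (V - U) + ∑ i, lam i • (A i * U)) ≤ ε ∧
  vecNorm (fun i => Aop A (U * Vᵀ) i - b i) ≤ ε

/-- `(U, λ)` is an ε-KKT point of the Burer–Monteiro problem
`min f(UUᵀ) s.t. 𝒜(UUᵀ) = b`, where `grad` denotes the gradient of `f`. -/
def IsBMEpsKKT {n m r : ℕ} (grad : Matrix (Fin n) (Fin n) ℝ → Matrix (Fin n) (Fin n) ℝ)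
    (A : Fin m → Matrix (Fin n) (Fin n) ℝ) (b : Fin m → ℝ) (ε : ℝ)
    (U : Matrix (Fin n) (Fin r) ℝ) (lam : Fin m → ℝ) : Prop :=
  frobNorm ((2 : ℝ) • (grad (U * Uᵀ) * U) + ∑ i, lam i • (A i * U)) ≤ ε ∧
  vecNorm (fun i => Aop A (U * Uᵀ) i - b i) ≤ ε

/-- The augmented Lagrangian `L_ρ(U,V,λ)` of the penalized problem. -/
def augL {n m r : ℕ} (f : Matrix (Fin n) (Fin n) ℝ → ℝ)
    (A : Fin m → Matrix (Fin n) (Fin n) ℝ) (b : Fin m → ℝ) (ρ γ : ℝ)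
    (U V : Matrix (Fin n) (Fin r) ℝ) (lam : Fin m → ℝ) : ℝ :=
  f (U * Vᵀ) + γ / 2 * (frobNorm (U - V)) ^ 2
    + ∑ i, lam i * (Aop A (U * Vᵀ) i - b i)
    + ρ / 2 * (vecNorm (fun i => Aop A (U * Vᵀ) i - b i)) ^ 2

/-- The level set `S_β` of the penalty function. -/
def Sset {n m r : ℕ} (f : Matrix (Fin n) (Fin n) ℝ → ℝ)
    (A : Fin m → Matrix (Fin n) (Fin n) ℝ) (b : Fin m → ℝ) (ρ₀ β : ℝ) :
    Set (Matrix (Fin n) (Fin r) ℝ × Matrix (Fin n) (Fin r) ℝ) :=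
  {p | f (p.1 * p.2ᵀ) + ρ₀ / 2 * (frobNorm (p.1 - p.2)) ^ 2
      + ρ₀ / 2 * (vecNorm (fun i => Aop A (p.1 * p.2ᵀ) i - b i)) ^ 2 ≤ β}

/-- `𝒞(U)`: the `nr × m` matrix whose `i`-th column is the vectorization of `A_i U`. -/
def Cmat {n m r : ℕ} (A : Fin m → Matrix (Fin n) (Fin n) ℝ)
    (U : Matrix (Fin n) (Fin r) ℝ) : Matrix (Fin n × Fin r) (Fin m) ℝ :=
  Matrix.of fun p i => (A i * U) p.1 p.2

/-- Smallest singular value of a real matrix, as the infimum of `‖Mx‖` over unit vectors. -/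
def sigmaMin {α β : Type*} [Fintype α] [Fintype β] (M : Matrix α β ℝ) : ℝ :=
  sInf {s | ∃ x : β → ℝ, vecNorm x = 1 ∧ s = vecNorm (M.mulVec x)}

/-- Norm of the full gradient of the augmented Lagrangian at `(U, V, λ)`
(for symmetric `f`, with `grad` the gradient of `f`). -/
def gradAugLNorm {n m r : ℕ} (grad : Matrix (Fin n) (Fin n) ℝ → Matrix (Fin n) (Fin n) ℝ)
    (A : Fin m → Matrix (Fin n) (Fin n) ℝ) (b : Fin m → ℝ) (ρ γ : ℝ)
    (U V : Matrix (Fin n) (Fin r) ℝ) (lam : Fin m → ℝ) : ℝ :=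
  Real.sqrt
    ((frobNorm (grad (U * Vᵀ) * V + γ • (U - V)
        + ∑ i, (lam i + ρ * (Aop A (U * Vᵀ) i - b i)) • (A i * V))) ^ 2
      + (frobNorm (grad (V * Uᵀ) * U + γ • (V - U)
        + ∑ i, (lam i + ρ * (Aop A (U * Vᵀ) i - b i)) • (A i * U))) ^ 2
      + (vecNorm (fun i => Aop A (U * Vᵀ) i - b i)) ^ 2)

/-- Distance between two primal-dual triples, induced by the Frobenius/Euclidean norms. -/
def tripDist {n m r : ℕ}
    (p q : Matrix (Fin n) (Fin r) ℝ × Matrix (Fin n) (Fin r) ℝ × (Fin m → ℝ)) : ℝ :=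
  Real.sqrt ((frobNorm (p.1 - q.1)) ^ 2 + (frobNorm (p.2.1 - q.2.1)) ^ 2
    + (vecNorm (fun i => p.2.2 i - q.2.2 i)) ^ 2)

/-- The set `𝒲` of KKT points of the penalized problem. -/
def KKTset {n m : ℕ} (r : ℕ) (grad : Matrix (Fin n) (Fin n) ℝ → Matrix (Fin n) (Fin n) ℝ)
    (A : Fin m → Matrix (Fin n) (Fin n) ℝ) (b : Fin m → ℝ) (γ : ℝ) :
    Set (Matrix (Fin n) (Fin r) ℝ × Matrix (Fin n) (Fin r) ℝ × (Fin m → ℝ)) :=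
  {p | IsPenEpsKKT grad A b γ 0 p.1 p.2.1 p.2.2}



attribute [local instance] Matrix.frobeniusNormedAddCommGroup Matrix.frobeniusNormedSpace

lemma frobNorm_eq_norm {α β : Type*} [Fintype α] [Fintype β] (X : Matrix α β ℝ) :
    frobNorm X = ‖X‖ := by
  rw [frobNorm, Matrix.frobenius_norm_def, Real.sqrt_eq_rpow]
  norm_num [Real.norm_eq_abs, sq_abs]

lemma cross_term_aux {n r : ℕ}
    (G₁ G₂ : Matrix (Fin n) (Fin n) ℝ) (U V : Matrix (Fin n) (Fin r) ℝ)
    (σ L : ℝ) (hσ : 0 ≤ σ) (hL : 0 ≤ L)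
    (hU : ‖U‖ ≤ σ) (hV : ‖V‖ ≤ σ)
    (hLip : ‖G₁ - G₂‖ ≤ L * ‖U * Vᵀ - V * Uᵀ‖) :
    ‖(2 : ℝ)⁻¹ • ((G₁ - G₂) * (V - U))‖ ≤ L * σ * ‖V - U‖ ^ 2 := by
  have h1 : ‖U * Vᵀ - V * Uᵀ‖ ≤ 2 * σ * ‖V - U‖ := by
    have key : U * Vᵀ - V * Uᵀ = (U - V) * Vᵀ + V * (V - U)ᵀ := by
      simp [Matrix.sub_mul, Matrix.mul_sub, Matrix.transpose_sub]
    rw [key]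
    calc ‖(U - V) * Vᵀ + V * (V - U)ᵀ‖
        ≤ ‖(U - V) * Vᵀ‖ + ‖V * (V - U)ᵀ‖ := norm_add_le _ _
      _ ≤ ‖U - V‖ * ‖Vᵀ‖ + ‖V‖ * ‖(V - U)ᵀ‖ := by
          gcongr <;> exact Matrix.frobenius_norm_mul _ _
      _ = ‖V - U‖ * ‖V‖ + ‖V‖ * ‖V - U‖ := by
          rw [Matrix.frobenius_norm_transpose, Matrix.frobenius_norm_transpose,
            ← norm_neg (U - V), neg_sub]
      _ ≤ ‖V - U‖ * σ + σ * ‖V - U‖ := by gcongr <;> positivity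
      _ = 2 * σ * ‖V - U‖ := by ring
  calc ‖(2 : ℝ)⁻¹ • ((G₁ - G₂) * (V - U))‖
      = 2⁻¹ * ‖(G₁ - G₂) * (V - U)‖ := by
        rw [norm_smul]; norm_num
    _ ≤ 2⁻¹ * (‖G₁ - G₂‖ * ‖V - U‖) := by
        gcongr; exact Matrix.frobenius_norm_mul _ _
    _ ≤ 2⁻¹ * ((L * (2 * σ * ‖V - U‖)) * ‖V - U‖) := by
        gcongr
        calc ‖G₁ - G₂‖ ≤ L * ‖U * Vᵀ - V * Uᵀ‖ := hLip
          _ ≤ L * (2 * σ * ‖V - U‖) := by gcongr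
    _ = L * σ * ‖V - U‖ ^ 2 := by ring

attribute [local instance] Matrix.frobeniusNormedAddCommGroup Matrix.frobeniusNormedSpace


/-- inequality (part3) in the proof of Theorem 2.1: cross-term bound. -/
theorem cross_term_bound
    (n r : ℕ) (hn : 0 < n) (hr : 0 < r)
    (f : Matrix (Fin n) (Fin n) ℝ → ℝ)
    (grad : Matrix (Fin n) (Fin n) ℝ → Matrix (Fin n) (Fin n) ℝ)
    (hgrad : ∀ X H : Matrix (Fin n) (Fin n) ℝ,
      HasDerivAt (fun t : ℝ => f (X + t • H)) (frobInner (grad X) H) 0)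
    (hgradCont : Continuous grad)
    (σ L : ℝ) (hσ : 0 < σ) (hL : 0 < L)
    (hgradLip : ∀ X Y : Matrix (Fin n) (Fin n) ℝ, frobNorm X ≤ σ ^ 2 → frobNorm Y ≤ σ ^ 2 →
      frobNorm (grad X - grad Y) ≤ L * frobNorm (X - Y))
    (U V : Matrix (Fin n) (Fin r) ℝ) (hU : frobNorm U ≤ σ) (hV : frobNorm V ≤ σ)
    (Uh : Matrix (Fin n) (Fin r) ℝ) (hUh : Uh = (2 : ℝ)⁻¹ • (U + V))
    :
    frobNorm (grad (U * Vᵀ) * (V - Uh) + grad (V * Uᵀ) * (U - Uh))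
      ≤ L * σ * (frobNorm (V - U)) ^ 2 := by
  have hrw : grad (U * Vᵀ) * (V - Uh) + grad (V * Uᵀ) * (U - Uh)
      = (2 : ℝ)⁻¹ • ((grad (U * Vᵀ) - grad (V * Uᵀ)) * (V - U)) := by
    subst hUh
    have h1 : V - (2 : ℝ)⁻¹ • (U + V) = (2 : ℝ)⁻¹ • (V - U) := by
      rw [smul_sub, smul_add]; module
    have h2 : U - (2 : ℝ)⁻¹ • (U + V) = -((2 : ℝ)⁻¹ • (V - U)) := by
      rw [smul_sub, smul_add]; module
    rw [h1, h2, Matrix.mul_smul, Matrix.mul_neg, Matrix.mul_smul, Matrix.sub_mul]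
    rw [smul_sub]
    abel
  rw [hrw]
  simp only [frobNorm_eq_norm] at *
  apply cross_term_aux _ _ _ _ σ L hσ.le hL.le hU hV
  have hUV : ‖U * Vᵀ‖ ≤ σ ^ 2 := by
    calc ‖U * Vᵀ‖ ≤ ‖U‖ * ‖Vᵀ‖ := Matrix.frobenius_norm_mul _ _
      _ ≤ σ * σ := by rw [Matrix.frobenius_norm_transpose]; gcongr <;>
            first | exact (norm_nonneg _).trans hU | assumption
      _ = σ ^ 2 := (sq σ).symm
  have hVU : ‖V * Uᵀ‖ ≤ σ ^ 2 := by
    calc ‖V * Uᵀ‖ ≤ ‖V‖ * ‖Uᵀ‖ := Matrix.frobenius_norm_mul _ _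
      _ ≤ σ * σ := by rw [Matrix.frobenius_norm_transpose]; gcongr <;>
            first | exact (norm_nonneg _).trans hV | assumption
      _ = σ ^ 2 := (sq σ).symm
  exact hgradLip (U * Vᵀ) (V * Uᵀ) hUV hVU
end
end

section
/- Proposition 3.2(i): If there exists ρ₀ > 0 such that the function X ↦ f(X) + (ρ₀/2)‖𝒜(X) − b‖_2² is strongly convex on ℝ^{n×n}, then for every β ∈ ℝ the level set S_β = {(U,V) ∈ ℝ^{n×r} × ℝ^{n×r} : f(UVᵀ) + (ρ₀/2)‖U − V‖_F² + (ρ₀/2)‖𝒜(UVᵀ) − b‖_2² ≤ β} is either compact or empty. -/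
/-! Put `g X = f X + (ρ₀/2)‖𝒜(X) − b‖²`. Since `h = g − (μ/2)‖·‖²` is convex and bounded above on the
unit ball, writing `0` as a convex combination of `X` and `−X/‖X‖` bounds `h X` below by an affine
function of `‖X‖`; so `g` grows quadratically and its sublevel sets are bounded. On `S_β` we have
`g(UVᵀ) ≤ β`, which bounds `UVᵀ`, hence bounds `g(UVᵀ)` below and therefore `‖U − V‖`; finally
`‖U‖² + ‖V‖² = ‖U − V‖² + 2 tr(UVᵀ)` bounds `(U, V)`. -/

open Matrix
open scoped BigOperators

noncomputable section

open Set Metric Bornology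

section Coercive

variable {E : Type*} [NormedAddCommGroup E] [NormedSpace ℝ E]

lemma ConvexOn.lower_bound_of_le_on_closedBall {h : E → ℝ} (hh : ConvexOn ℝ univ h) {M : ℝ}
    (hM : ∀ y ∈ closedBall (0 : E) 1, h y ≤ M) (x : E) :
    (‖x‖ + 1) * h 0 - ‖x‖ * M ≤ h x := by
  rcases eq_or_ne x 0 with rfl | hx
  · simp
  set t := ‖x‖
  have ht : 0 < t := norm_pos_iff.2 hx
  have hy : -t⁻¹ • x ∈ closedBall (0 : E) 1 := by
    rw [mem_closedBall_zero_iff, norm_smul, norm_neg, norm_inv, norm_norm, inv_mul_cancel₀ ht.ne']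
  have hcomb : (1 / (t + 1)) • x + (t / (t + 1)) • (-t⁻¹ • x) = 0 := by
    rw [smul_smul, ← add_smul]
    convert zero_smul ℝ x
    field_simp
    ring
  have key := hh.2 (mem_univ x) (mem_univ (-t⁻¹ • x)) (by positivity : 0 ≤ 1 / (t + 1))
    (by positivity : 0 ≤ t / (t + 1)) (by field_simp; ring)
  rw [hcomb, smul_eq_mul, smul_eq_mul, div_mul_eq_mul_div, div_mul_eq_mul_div, one_mul,
    ← add_div, le_div_iff₀ (by positivity)] at key
  nlinarith [hM _ hy]

lemma isBounded_setOf_le_of_convexOn_sub_sq [ProperSpace E] {g : E → ℝ} (hg : Continuous g)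
    {μ : ℝ} (hμ : 0 < μ) (hconv : ConvexOn ℝ univ fun x => g x - μ / 2 * ‖x‖ ^ 2) (β : ℝ) :
    IsBounded {x | g x ≤ β} := by
  set h := fun x => g x - μ / 2 * ‖x‖ ^ 2
  obtain ⟨M, hM⟩ : BddAbove (h '' closedBall 0 1) :=
    (isCompact_closedBall 0 1).bddAbove_image (by fun_prop)
  set K := |β - h 0| + |M - h 0|
  refine isBounded_iff_forall_norm_le.2 ⟨max 1 (2 * K / μ), fun x (hx : g x ≤ β) => ?_⟩
  rcases le_or_gt ‖x‖ 1 with hx1 | hx1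
  · exact le_max_of_le_left hx1
  have hlow := hconv.lower_bound_of_le_on_closedBall (fun y hy => hM (mem_image_of_mem h hy)) x
  have hgrowth : μ / 2 * ‖x‖ ^ 2 ≤ ‖x‖ * K := by
    have hhx : h x = g x - μ / 2 * ‖x‖ ^ 2 := rfl
    nlinarith [le_abs_self (β - h 0),
      mul_le_mul_of_nonneg_left (le_abs_self (M - h 0)) (norm_nonneg x),
      mul_nonneg (sub_nonneg.2 hx1.le) (abs_nonneg (β - h 0))]
  refine le_max_of_le_right ((le_div_iff₀ hμ).2 ?_)
  nlinarith

end Coercive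

section Frobenius

attribute [local instance] Matrix.frobeniusNormedAddCommGroup Matrix.frobeniusNormedSpace

variable {ι κ : Type*} [Fintype ι] [Fintype κ]

lemma frobNorm_eq_norm_s10 (X : Matrix ι κ ℝ) : frobNorm X = ‖X‖ := by
  simp only [frobNorm, Matrix.frobenius_norm_def, Real.sqrt_eq_rpow, Real.rpow_two,
    Real.norm_eq_abs, sq_abs]

lemma Matrix.frobenius_norm_sq_eq_sum (X : Matrix ι κ ℝ) : ‖X‖ ^ 2 = ∑ i, ∑ j, X i j ^ 2 := by
  rw [← frobNorm_eq_norm_s10, frobNorm, Real.sq_sqrt (by positivity)]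

lemma Matrix.abs_apply_le_frobenius_norm (X : Matrix ι κ ℝ) (i : ι) (j : κ) : |X i j| ≤ ‖X‖ := by
  rw [← frobNorm_eq_norm_s10]
  refine Real.abs_le_sqrt ?_
  calc X i j ^ 2 ≤ ∑ j', X i j' ^ 2 :=
        Finset.single_le_sum (fun _ _ => sq_nonneg _) (Finset.mem_univ j)
    _ ≤ ∑ i', ∑ j', X i' j' ^ 2 :=
        Finset.single_le_sum (f := fun i' => ∑ j', X i' j' ^ 2)
          (fun _ _ => by positivity) (Finset.mem_univ i)

lemma Matrix.trace_le_card_mul_frobenius_norm (X : Matrix ι ι ℝ) :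
    X.trace ≤ Fintype.card ι * ‖X‖ :=
  calc X.trace ≤ ∑ _i : ι, ‖X‖ :=
        Finset.sum_le_sum fun i _ => (le_abs_self _).trans (X.abs_apply_le_frobenius_norm i i)
    _ = Fintype.card ι * ‖X‖ := by simp

lemma Matrix.frobenius_norm_sq_add_norm_sq (U V : Matrix ι κ ℝ) :
    ‖U‖ ^ 2 + ‖V‖ ^ 2 = ‖U - V‖ ^ 2 + 2 * (U * Vᵀ).trace := by
  simp only [Matrix.frobenius_norm_sq_eq_sum, Matrix.trace, Matrix.diag, Matrix.mul_apply,
    Matrix.transpose_apply, Matrix.sub_apply, Finset.mul_sum, ← Finset.sum_add_distrib]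
  exact Finset.sum_congr rfl fun i _ => Finset.sum_congr rfl fun j _ => by ring

lemma isCompact_setOf_comp_mul_transpose_add_norm_sub_sq_le {g : Matrix ι ι ℝ → ℝ}
    (hg : Continuous g) {β : ℝ} (hbdd : IsBounded {X | g X ≤ β}) {ρ : ℝ} (hρ : 0 < ρ) :
    IsCompact {p : Matrix ι κ ℝ × Matrix ι κ ℝ | g (p.1 * p.2ᵀ) + ρ / 2 * ‖p.1 - p.2‖ ^ 2 ≤ β} := by
  have hmul : Continuous fun p : Matrix ι κ ℝ × Matrix ι κ ℝ => p.1 * p.2ᵀ :=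
    continuous_fst.matrix_mul continuous_snd.matrix_transpose
  refine isCompact_of_isClosed_isBounded
    (isClosed_le ((hg.comp hmul).add (by fun_prop)) continuous_const) ?_
  obtain ⟨T, hT⟩ := isBounded_iff_forall_norm_le.1 hbdd
  obtain ⟨c, hc⟩ : BddBelow (g '' closedBall 0 T) :=
    (isCompact_closedBall 0 T).bddBelow_image hg.continuousOn
  refine isBounded_iff_forall_norm_le.2
    ⟨√(2 * (β - c) / ρ + 2 * (Fintype.card ι * T)), fun ⟨U, V⟩ hUV => ?_⟩
  change g (U * Vᵀ) + ρ / 2 * ‖U - V‖ ^ 2 ≤ β at hUV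
  have hX : ‖U * Vᵀ‖ ≤ T := hT _ (show g (U * Vᵀ) ≤ β by nlinarith)
  have hc' : c ≤ g (U * Vᵀ) := hc (mem_image_of_mem g (mem_closedBall_zero_iff.2 hX))
  have hdiff : ‖U - V‖ ^ 2 ≤ 2 * (β - c) / ρ := by
    rw [le_div_iff₀ hρ]
    linarith
  have htrace : (U * Vᵀ).trace ≤ Fintype.card ι * T :=
    (U * Vᵀ).trace_le_card_mul_frobenius_norm.trans
      (mul_le_mul_of_nonneg_left hX (Nat.cast_nonneg _))
  have hsum := U.frobenius_norm_sq_add_norm_sq V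
  rw [Prod.norm_def]
  refine max_le (Real.le_sqrt_of_sq_le ?_) (Real.le_sqrt_of_sq_le ?_) <;>
    nlinarith [sq_nonneg ‖U‖, sq_nonneg ‖V‖]

lemma continuous_Aop {n m : ℕ} (A : Fin m → Matrix (Fin n) (Fin n) ℝ) : Continuous (Aop A) := by
  unfold Aop frobInner
  fun_prop

lemma continuous_vecNorm : Continuous (vecNorm : (ι → ℝ) → ℝ) := by
  unfold vecNorm
  fun_prop

theorem level_set_compact_of_strongly_convex_general
    (n m r : ℕ)
    (f : Matrix (Fin n) (Fin n) ℝ → ℝ)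
    (hfCont : Continuous f)
    (A : Fin m → Matrix (Fin n) (Fin n) ℝ)
    (b : Fin m → ℝ)
    (ρ₀ : ℝ) (hρ₀ : 0 < ρ₀) (μ : ℝ) (hμ : 0 < μ)
    (hsc : ConvexOn ℝ Set.univ (fun X : Matrix (Fin n) (Fin n) ℝ =>
      f X + ρ₀ / 2 * (vecNorm (fun i => Aop A X i - b i)) ^ 2 - μ / 2 * (frobNorm X) ^ 2)) :
    ∀ β : ℝ, IsCompact (Sset (r := r) f A b ρ₀ β) ∨ Sset (r := r) f A b ρ₀ β = ∅ := by
  intro β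
  left
  set g := fun X => f X + ρ₀ / 2 * vecNorm (fun i => Aop A X i - b i) ^ 2
  have hg : Continuous g :=
    hfCont.add (continuous_const.mul ((continuous_vecNorm.comp
      ((continuous_Aop A).sub continuous_const)).pow 2))
  simp only [frobNorm_eq_norm_s10] at hsc
  have hS : Sset (r := r) f A b ρ₀ β = {p | g (p.1 * p.2ᵀ) + ρ₀ / 2 * ‖p.1 - p.2‖ ^ 2 ≤ β} := by
    ext p
    simp only [Sset, mem_ofPred_eq, frobNorm_eq_norm_s10, g, add_right_comm]
  rw [hS]
  exact isCompact_setOf_comp_mul_transpose_add_norm_sub_sq_le hg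
    (isBounded_setOf_le_of_convexOn_sub_sq hg hμ hsc β) hρ₀

/-- Proposition 3.2(i): if `f + (ρ₀/2)‖𝒜(·) − b‖²` is strongly convex,
then every level set `S_β` is compact or empty. -/
theorem level_set_compact_of_strongly_convex
    (n m r : ℕ) (hn : 0 < n) (hm : 0 < m) (hr : 0 < r)
    (f : Matrix (Fin n) (Fin n) ℝ → ℝ)
    (hconv : ConvexOn ℝ Set.univ f) (hfCont : Continuous f)
    (A : Fin m → Matrix (Fin n) (Fin n) ℝ) (hAsym : ∀ i, (A i)ᵀ = A i)
    (b : Fin m → ℝ)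
    (ρ₀ : ℝ) (hρ₀ : 0 < ρ₀) (μ : ℝ) (hμ : 0 < μ)
    (hsc : ConvexOn ℝ Set.univ (fun X : Matrix (Fin n) (Fin n) ℝ =>
      f X + ρ₀ / 2 * (vecNorm (fun i => Aop A X i - b i)) ^ 2 - μ / 2 * (frobNorm X) ^ 2)) :
    ∀ β : ℝ, IsCompact (Sset (r := r) f A b ρ₀ β) ∨ Sset (r := r) f A b ρ₀ β = ∅ :=
  level_set_compact_of_strongly_convex_general n m r f hfCont A b ρ₀ hρ₀ μ hμ hsc

end Frobenius
end
end
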